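/- arXiv:2105.13656 — 2 statements merged into one kernel-verified Lean document; each statement's English description precedes it below -/
import Mathlib

section
/- Let A, E ∈ ℂ^{n×n} with A skew-Hermitian and E Hermitian (so the pencil L(s) = A + sE is *-odd), and assume L(s) is regular. Then the infimum of √(‖Δ_A‖² + ‖Δ_E‖²) over all pairs (Δ_A, Δ_E) with Δ_A skew-Hermitian and Δ_E Hermitian for which there exists a nonzero v ∈ ℂⁿ with (A − Δ_A)v = 0 and (E − Δ_E)v = 0 equals √(λ_min(AᴴA + EᴴE)). -/
open Matrix

/-- The spectral norm (ℓ² operator norm) of a complex matrix. -/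
noncomputable def specNorm {k : Type*} [Fintype k] [DecidableEq k]
    (X : Matrix k k ℂ) : ℝ :=
  ‖Matrix.toEuclideanCLM (𝕜 := ℂ) X‖

/-- The smallest eigenvalue of a Hermitian matrix (junk value `0` otherwise). -/
noncomputable def lamMin {k : Type*} [Fintype k] [DecidableEq k]
    (H : Matrix k k ℂ) : ℝ :=
  if h : H.IsHermitian then ⨅ i, h.eigenvalues i else 0

/-!
Let `v` be a unit eigenvector of `AᴴA + EᴴE` for its smallest eigenvalue `μ`, so that
`‖Av‖² + ‖Ev‖² = μ`. If `(A - Δ_A) w = (E - Δ_E) w = 0` with `w ≠ 0`, then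
`μ‖w‖² ≤ ‖Aw‖² + ‖Ew‖² = ‖Δ_A w‖² + ‖Δ_E w‖² ≤ (‖Δ_A‖² + ‖Δ_E‖²)‖w‖²`, which is the lower bound.
It is attained: `vᴴEv` is real and `vᴴAv` is purely imaginary, so `‖Ev‖` times the reflection
exchanging `v` and `Ev/‖Ev‖` is a Hermitian `Δ_E` with `Δ_E v = Ev` and `‖Δ_E‖ ≤ ‖Ev‖`, and `i`
times the same construction applied to `-i Av` gives a skew-Hermitian `Δ_A` with `Δ_A v = Av`
and `‖Δ_A‖ ≤ ‖Av‖`.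
-/

open ContinuousLinearMap InnerProductSpace

section StructuredMapping

variable {𝕜 E : Type*} [RCLike 𝕜] [NormedAddCommGroup E] [InnerProductSpace 𝕜 E]

theorem Submodule.reflection_sub_of_inner_comm {v w : E} (hnorm : ‖v‖ = ‖w‖)
    (hinner : ⟪w, v⟫_𝕜 = ⟪v, w⟫_𝕜) : reflection (𝕜 ∙ (v - w))ᗮ v = w := by
  set R : E ≃ₗᵢ[𝕜] E := reflection (𝕜 ∙ (v - w))ᗮ
  suffices R v + R v = w + w by
    apply smul_right_injective E (two_ne_zero : (2 : 𝕜) ≠ 0)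
    simpa [two_smul] using this
  have h₁ : R (v - w) = -(v - w) := reflection_orthogonalComplement_singleton_eq_neg (v - w)
  have h₂ : R (v + w) = v + w := by
    apply reflection_mem_subspace_eq_self
    rw [Submodule.mem_orthogonal_singleton_iff_inner_left, inner_add_left, inner_sub_right,
      inner_sub_right, inner_self_eq_norm_sq_to_K, inner_self_eq_norm_sq_to_K, hnorm, hinner]
    ring
  convert congr_arg₂ (· + ·) h₂ h₁ using 1
  · simp
  · abel

variable [CompleteSpace E]

theorem exists_isSelfAdjoint_apply_eq {v y : E} (hv : ‖v‖ = 1) (hvy : ⟪y, v⟫_𝕜 = ⟪v, y⟫_𝕜) :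
    ∃ T : E →L[𝕜] E, IsSelfAdjoint T ∧ T v = y ∧ ‖T‖ ≤ ‖y‖ := by
  rcases eq_or_ne y 0 with rfl | hy
  · exact ⟨0, .zero _, by simp, by simp⟩
  have hy' : (‖y‖ : 𝕜) ≠ 0 := by simpa using hy
  set u : E := (‖y‖⁻¹ : 𝕜) • y
  have hyu : (‖y‖ : 𝕜) • u = y := by simp [u, smul_smul, hy']
  have hu : ‖u‖ = 1 := by simp [u, norm_smul, hy]
  have huv : ⟪u, v⟫_𝕜 = ⟪v, u⟫_𝕜 := by
    simp [u, inner_smul_left, inner_smul_right, hvy]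
  set R : E ≃ₗᵢ[𝕜] E := (𝕜 ∙ (v - u))ᗮ.reflection
  refine ⟨(‖y‖ : 𝕜) • (R : E →L[𝕜] E), ?_, ?_, ?_⟩
  · refine IsSelfAdjoint.smul (by simp [IsSelfAdjoint]) ?_
    simp [IsSelfAdjoint, R]
  · simp [R, Submodule.reflection_sub_of_inner_comm (hv.trans hu.symm) huv, hyu]
  · calc ‖(‖y‖ : 𝕜) • (R : E →L[𝕜] E)‖ ≤ ‖y‖ * 1 := by
          rw [norm_smul, RCLike.norm_ofReal, abs_norm]
          gcongr
          exact LinearIsometry.norm_toContinuousLinearMap_le _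
      _ = ‖y‖ := mul_one _

end StructuredMapping

section ComplexHilbert

variable {E : Type*} [NormedAddCommGroup E] [InnerProductSpace ℂ E] [CompleteSpace E]

theorem exists_star_eq_neg_apply_eq {v y : E} (hv : ‖v‖ = 1) (hvy : ⟪y, v⟫_ℂ = -⟪v, y⟫_ℂ) :
    ∃ T : E →L[ℂ] E, star T = -T ∧ T v = y ∧ ‖T‖ ≤ ‖y‖ := by
  obtain ⟨T, hT, hTv, hTnorm⟩ := exists_isSelfAdjoint_apply_eq (𝕜 := ℂ) (y := -Complex.I • y) hv
    (by rw [inner_smul_left, inner_smul_right, hvy]; simp)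
  refine ⟨Complex.I • T, ?_, ?_, ?_⟩
  · simp [star_smul, hT.star_eq]
  · simp [hTv, smul_smul]
  · simpa [norm_smul] using hTnorm

theorem ContinuousLinearMap.mul_norm_sq_le_re_inner_of_le_spectrum {T : E →L[ℂ] E}
    (hT : IsSelfAdjoint T) {r : ℝ} (hr : ∀ s ∈ spectrum ℝ T, r ≤ s) (x : E) :
    r * ‖x‖ ^ 2 ≤ RCLike.re ⟪x, T x⟫_ℂ := by
  have hpos := (le_def _ _).1 ((algebraMap_le_iff_le_spectrum hT).2 hr)
  have hrx : RCLike.re ⟪x, algebraMap ℝ (E →L[ℂ] E) r x⟫_ℂ = r * ‖x‖ ^ 2 := by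
    simp [← Complex.ofReal_pow]
  have h := hpos.re_inner_nonneg_right x
  rwa [_root_.sub_apply, inner_sub_right, map_sub, hrx, sub_nonneg] at h

end ComplexHilbert

section SmallestEigenvalue

variable {k : Type*} [Fintype k] [DecidableEq k]

theorem lamMin_of_isEmpty [IsEmpty k] (H : Matrix k k ℂ) : lamMin H = 0 := by
  unfold lamMin
  split_ifs <;> simp

theorem lamMin_le_of_mem_spectrum {H : Matrix k k ℂ} (hH : H.IsHermitian) {r : ℝ}
    (hr : r ∈ spectrum ℝ (toEuclideanCLM (𝕜 := ℂ) H)) : lamMin H ≤ r := by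
  have : r ∈ spectrum ℝ H := by
    rwa [← spectrum.preimage_algebraMap ℂ, AlgEquiv.spectrum_eq, spectrum.preimage_algebraMap] at hr
  obtain ⟨i, rfl⟩ := hH.spectrum_real_eq_range_eigenvalues ▸ this
  rw [lamMin, dif_pos hH]
  exact ciInf_le (Finite.bddBelow_range _) i

theorem lamMin_mul_norm_sq_le {H : Matrix k k ℂ} (hH : H.IsHermitian) (x : EuclideanSpace ℂ k) :
    lamMin H * ‖x‖ ^ 2 ≤ RCLike.re ⟪x, toEuclideanCLM (𝕜 := ℂ) H x⟫_ℂ :=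
  mul_norm_sq_le_re_inner_of_le_spectrum (hH.isSelfAdjoint.map _)
    (fun _ hr ↦ lamMin_le_of_mem_spectrum hH hr) x

theorem exists_norm_eq_one_eigenvector_lamMin [Nonempty k] {H : Matrix k k ℂ}
    (hH : H.IsHermitian) :
    ∃ x : EuclideanSpace ℂ k, ‖x‖ = 1 ∧ toEuclideanCLM (𝕜 := ℂ) H x = (lamMin H : ℂ) • x := by
  obtain ⟨i, hi⟩ := Finite.exists_min hH.eigenvalues
  have hmin : lamMin H = hH.eigenvalues i := by
    rw [lamMin, dif_pos hH]
    exact le_antisymm (ciInf_le (Finite.bddBelow_range _) i) (le_ciInf hi)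
  refine ⟨hH.eigenvectorBasis i, hH.eigenvectorBasis.norm_eq_one i, ?_⟩
  ext1
  simp [hmin, hH.mulVec_eigenvectorBasis]

theorem re_inner_toEuclideanCLM_conjTranspose_mul_self_add (A E : Matrix k k ℂ)
    (x : EuclideanSpace ℂ k) :
    RCLike.re ⟪x, toEuclideanCLM (𝕜 := ℂ) (Aᴴ * A + Eᴴ * E) x⟫_ℂ =
      ‖toEuclideanCLM (𝕜 := ℂ) A x‖ ^ 2 + ‖toEuclideanCLM (𝕜 := ℂ) E x‖ ^ 2 := by
  simp only [← star_eq_conjTranspose, map_add, map_mul, map_star, star_eq_adjoint, mul_def,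
    _root_.add_apply, inner_add_right, map_add, apply_norm_sq_eq_inner_adjoint_right]

theorem lamMin_le_specNorm_sq_add_sq {A E DA DE : Matrix k k ℂ} {v : k → ℂ} (hv : v ≠ 0)
    (hAv : (A - DA) *ᵥ v = 0) (hEv : (E - DE) *ᵥ v = 0) :
    lamMin (Aᴴ * A + Eᴴ * E) ≤ specNorm DA ^ 2 + specNorm DE ^ 2 := by
  set S := toEuclideanCLM (n := k) (𝕜 := ℂ)
  set x := WithLp.toLp 2 v
  have hx : 0 < ‖x‖ ^ 2 := pow_pos (norm_pos_iff.2 (by simpa [x] using hv)) 2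
  have hSx : ∀ M DM : Matrix k k ℂ, (M - DM) *ᵥ v = 0 → S M x = S DM x := fun M DM h ↦ by
    rw [toEuclideanCLM_toLp, toEuclideanCLM_toLp, ← sub_eq_zero, ← WithLp.toLp_sub, ← sub_mulVec,
      h, WithLp.toLp_zero]
  have hH := (isHermitian_conjTranspose_mul_self A).add (isHermitian_conjTranspose_mul_self E)
  refine le_of_mul_le_mul_right ?_ hx
  calc lamMin (Aᴴ * A + Eᴴ * E) * ‖x‖ ^ 2
      ≤ RCLike.re ⟪x, S (Aᴴ * A + Eᴴ * E) x⟫_ℂ := lamMin_mul_norm_sq_le hH x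
    _ = ‖S DA x‖ ^ 2 + ‖S DE x‖ ^ 2 := by
      rw [re_inner_toEuclideanCLM_conjTranspose_mul_self_add, hSx A DA hAv, hSx E DE hEv]
    _ ≤ (‖S DA‖ * ‖x‖) ^ 2 + (‖S DE‖ * ‖x‖) ^ 2 := by
      gcongr <;> exact le_opNorm _ _
    _ = (specNorm DA ^ 2 + specNorm DE ^ 2) * ‖x‖ ^ 2 := by
      simp only [specNorm, S]; ring

theorem exists_perturbation_specNorm_sq_add_sq_le_lamMin [Nonempty k] {A E : Matrix k k ℂ}
    (hA : Aᴴ = -A) (hE : E.IsHermitian) :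
    ∃ (DA DE : Matrix k k ℂ) (v : k → ℂ), DAᴴ = -DA ∧ DE.IsHermitian ∧ v ≠ 0 ∧
      (A - DA) *ᵥ v = 0 ∧ (E - DE) *ᵥ v = 0 ∧
      specNorm DA ^ 2 + specNorm DE ^ 2 ≤ lamMin (Aᴴ * A + Eᴴ * E) := by
  set S := toEuclideanCLM (n := k) (𝕜 := ℂ)
  have hH := (isHermitian_conjTranspose_mul_self A).add (isHermitian_conjTranspose_mul_self E)
  obtain ⟨x, hx, hHx⟩ := exists_norm_eq_one_eigenvector_lamMin hH
  have hgram : ‖S A x‖ ^ 2 + ‖S E x‖ ^ 2 = lamMin (Aᴴ * A + Eᴴ * E) := by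
    rw [← re_inner_toEuclideanCLM_conjTranspose_mul_self_add, hHx, inner_smul_right,
      inner_self_eq_norm_sq_to_K, hx]
    simp
  have hSA : star (S A) = -S A := by rw [← map_star, star_eq_conjTranspose, hA, map_neg]
  obtain ⟨TA, hTA, hTAx, hTAn⟩ := exists_star_eq_neg_apply_eq hx (y := S A x) (by
    rw [← adjoint_inner_right, ← star_eq_adjoint, hSA, _root_.neg_apply, inner_neg_right])
  obtain ⟨TE, hTE, hTEx, hTEn⟩ := exists_isSelfAdjoint_apply_eq hx (y := S E x)
    ((hE.isSelfAdjoint.map S).isSymmetric x x)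
  have hker : ∀ (M : Matrix k k ℂ) (T : EuclideanSpace ℂ k →L[ℂ] EuclideanSpace ℂ k),
      T x = S M x → (M - S.symm T) *ᵥ WithLp.ofLp x = 0 := fun M T h ↦ by
    rw [← ofLp_toEuclideanCLM, map_sub, _root_.sub_apply, StarAlgEquiv.apply_symm_apply, h,
      sub_self, WithLp.ofLp_zero]
  refine ⟨S.symm TA, S.symm TE, WithLp.ofLp x, ?_, ?_, ?_, hker A TA hTAx, hker E TE hTEx, ?_⟩
  · rw [← star_eq_conjTranspose, ← S.symm_apply_apply (star _), map_star, S.apply_symm_apply, hTA,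
      map_neg]
  · rw [IsHermitian, ← star_eq_conjTranspose, ← S.symm_apply_apply (star _), map_star,
      S.apply_symm_apply, hTE.star_eq]
  · simpa using ne_zero_of_norm_ne_zero (hx.trans_ne one_ne_zero)
  · simp only [specNorm, S, StarAlgEquiv.apply_symm_apply, ← hgram]
    gcongr

end SmallestEigenvalue

theorem starOdd_distance_to_common_null_space_general
    {n : ℕ} (A E : Matrix (Fin n) (Fin n) ℂ)
    (hA : Aᴴ = -A) (hE : E.IsHermitian) :
    sInf {r : ℝ | ∃ (DA DE : Matrix (Fin n) (Fin n) ℂ) (v : Fin n → ℂ),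
        DAᴴ = -DA ∧ DE.IsHermitian ∧
        v ≠ 0 ∧ (A - DA).mulVec v = 0 ∧ (E - DE).mulVec v = 0 ∧
        r = Real.sqrt (specNorm DA ^ 2 + specNorm DE ^ 2)} =
      Real.sqrt (lamMin (Aᴴ * A + Eᴴ * E)) := by
  rcases isEmpty_or_nonempty (Fin n) with hn | hn
  · rw [lamMin_of_isEmpty, Real.sqrt_zero, ← Real.sInf_empty]
    congr 1
    refine Set.eq_empty_of_forall_notMem ?_
    rintro r ⟨DA, DE, v, -, -, hv, -⟩
    exact hv (Subsingleton.elim v 0)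
  · obtain ⟨DA, DE, v, hDA, hDE, hv, hAv, hEv, hle⟩ :=
      exists_perturbation_specNorm_sq_add_sq_le_lamMin hA hE
    refine IsLeast.csInf_eq ⟨⟨DA, DE, v, hDA, hDE, hv, hAv, hEv, ?_⟩, ?_⟩
    · rw [le_antisymm (lamMin_le_specNorm_sq_add_sq hv hAv hEv) hle]
    · rintro r ⟨DA', DE', w, -, -, hw, hAw, hEw, rfl⟩
      exact Real.sqrt_le_sqrt (lamMin_le_specNorm_sq_add_sq hw hAw hEw)

/-- For a regular *-odd pencil (A skew-Hermitian, E Hermitian) the structured distance to a common null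
space equals `√(λ_min(AᴴA + EᴴE))`. -/
theorem starOdd_distance_to_common_null_space
    {n : ℕ} (A E : Matrix (Fin n) (Fin n) ℂ)
    (hA : Aᴴ = -A) (hE : E.IsHermitian)
    (hreg : ∃ l : ℂ, (A + l • E).det ≠ 0) :
    sInf {r : ℝ | ∃ (DA DE : Matrix (Fin n) (Fin n) ℂ) (v : Fin n → ℂ),
        DAᴴ = -DA ∧ DE.IsHermitian ∧
        v ≠ 0 ∧ (A - DA).mulVec v = 0 ∧ (E - DE).mulVec v = 0 ∧
        r = Real.sqrt (specNorm DA ^ 2 + specNorm DE ^ 2)} =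
      Real.sqrt (lamMin (Aᴴ * A + Eᴴ * E)) :=
  starOdd_distance_to_common_null_space_general A E hA hE
end

section
/- Let A, E ∈ ℂ^{n×n} be Hermitian matrices such that the pencil L(s) = A + sE is regular, and let λ₁, …, λ_{n+1} ∈ ℂ be pairwise distinct non-real numbers with A + λ_j E invertible for each j. For each j set M_j = (A + λ_j E)^{−1} and define the Hermitian 2n×2n matrices G_j = [[M_jᴴM_j, λ_j M_jᴴM_j], [conj(λ_j) M_jᴴM_j, |λ_j|² M_jᴴM_j]], H_{1j} = i·[[M_j − M_jᴴ, λ_j M_j], [−conj(λ_j) M_jᴴ, 0]], and H_{2j} = i·[[0, −M_jᴴ], [M_j, λ_j M_j − conj(λ_j) M_jᴴ]]. Then the Hermitian structured distance to singularity satisfies δ^{Herm}(A,E)² ≥ max_{j=1,…,n+1} ( inf_{t₀,t₁ ∈ ℝ} λ_max(G_j + t₀ H_{1j} + t₁ H_{2j}) )^{−1}, where δ^{Herm}(A,E) := inf{ √(‖Δ_A‖² + ‖Δ_E‖²) : Δ_A, Δ_E Hermitian, det((A − Δ_A) + λ(E − Δ_E)) = 0 for all λ ∈ ℂ }. -/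
/-!
Let `(A - ΔA) + μ (E - ΔE)` be singular, with `ΔA, ΔE` Hermitian, and let `x ≠ 0` be a null
vector at `μ = λ_j`. With `M = (A + μE)⁻¹` this reads `x = M (ΔA x + μ ΔE x)`, so for
`w = (ΔA x, ΔE x)` one gets `w* G_j w = ‖x‖²`, while `w* H_{1j} w = -2 Im ((ΔA x)* x)` and
`w* H_{2j} w = -2 Im ((ΔE x)* x)` vanish since `ΔA, ΔE` are Hermitian. Hence, for all real
`t₀, t₁` and `K = G_j + t₀ H_{1j} + t₁ H_{2j}`,
`‖x‖² ≤ λ_max(K) ‖w‖² ≤ λ_max(K) (‖ΔA‖² + ‖ΔE‖²) ‖x‖²`, i.e. `λ_max(K)⁻¹ ≤ ‖ΔA‖² + ‖ΔE‖²`.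
-/

open Matrix

/-- The largest eigenvalue of a Hermitian matrix (junk value `0` otherwise). -/
noncomputable def lamMax {k : Type*} [Fintype k] [DecidableEq k]
    (H : Matrix k k ℂ) : ℝ :=
  if h : H.IsHermitian then ⨆ i, h.eigenvalues i else 0

/-- `G_j = [[MᴴM, λMᴴM], [λ̄MᴴM, |λ|²MᴴM]]` with `M = (A + λE)⁻¹`. -/
noncomputable def Gmat {n : ℕ} (A E : Matrix (Fin n) (Fin n) ℂ) (μ : ℂ) :
    Matrix (Fin n ⊕ Fin n) (Fin n ⊕ Fin n) ℂ :=
  Matrix.fromBlocks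
    (((A + μ • E)⁻¹)ᴴ * (A + μ • E)⁻¹)
    (μ • (((A + μ • E)⁻¹)ᴴ * (A + μ • E)⁻¹))
    ((starRingEnd ℂ μ) • (((A + μ • E)⁻¹)ᴴ * (A + μ • E)⁻¹))
    ((starRingEnd ℂ μ * μ) • (((A + μ • E)⁻¹)ᴴ * (A + μ • E)⁻¹))

/-- `H_{1j} = i·[[M − Mᴴ, λM], [−λ̄Mᴴ, 0]]` with `M = (A + λE)⁻¹`. -/
noncomputable def H1mat {n : ℕ} (A E : Matrix (Fin n) (Fin n) ℂ) (μ : ℂ) :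
    Matrix (Fin n ⊕ Fin n) (Fin n ⊕ Fin n) ℂ :=
  Complex.I • Matrix.fromBlocks
    ((A + μ • E)⁻¹ - ((A + μ • E)⁻¹)ᴴ)
    (μ • (A + μ • E)⁻¹)
    (-((starRingEnd ℂ μ) • ((A + μ • E)⁻¹)ᴴ))
    0

/-- `H_{2j} = i·[[0, −Mᴴ], [M, λM − λ̄Mᴴ]]` with `M = (A + λE)⁻¹`. -/
noncomputable def H2mat {n : ℕ} (A E : Matrix (Fin n) (Fin n) ℂ) (μ : ℂ) :
    Matrix (Fin n ⊕ Fin n) (Fin n ⊕ Fin n) ℂ :=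
  Complex.I • Matrix.fromBlocks
    0
    (-(((A + μ • E)⁻¹)ᴴ))
    ((A + μ • E)⁻¹)
    (μ • (A + μ • E)⁻¹ - (starRingEnd ℂ μ) • ((A + μ • E)⁻¹)ᴴ)

section Spectral

variable {m : Type*} [Fintype m]

lemma lamMax_of_isEmpty [DecidableEq m] [IsEmpty m] (H : Matrix m m ℂ) : lamMax H = 0 := by
  unfold lamMax
  split_ifs <;> simp

open scoped MatrixOrder in
lemma Matrix.IsHermitian.le_algebraMap_lamMax [DecidableEq m] {H : Matrix m m ℂ}
    (hH : H.IsHermitian) : H ≤ algebraMap ℝ (Matrix m m ℂ) (lamMax H) := by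
  rw [le_algebraMap_iff_spectrum_le hH.isSelfAdjoint, hH.spectrum_real_eq_range_eigenvalues]
  rintro _ ⟨i, rfl⟩
  rw [lamMax, dif_pos hH]
  exact le_ciSup (Set.finite_range _).bddAbove i

lemma Matrix.IsHermitian.re_dotProduct_mulVec_le_lamMax [DecidableEq m] {H : Matrix m m ℂ}
    (hH : H.IsHermitian) (w : m → ℂ) : (star w ⬝ᵥ H *ᵥ w).re ≤ lamMax H * (star w ⬝ᵥ w).re := by
  simpa [Algebra.algebraMap_eq_smul_one, sub_mulVec, smul_mulVec] using
    hH.le_algebraMap_lamMax.re_dotProduct_nonneg w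

lemma re_star_dotProduct_self (v : m → ℂ) : (star v ⬝ᵥ v).re = ‖WithLp.toLp 2 v‖ ^ 2 := by
  rw [← inner_self_eq_norm_sq (𝕜 := ℂ), EuclideanSpace.inner_toLp_toLp, dotProduct_comm]
  rfl

lemma re_star_dotProduct_self_pos {v : m → ℂ} (hv : v ≠ 0) : 0 < (star v ⬝ᵥ v).re := by
  have : WithLp.toLp 2 v ≠ 0 := by simpa using hv
  rw [re_star_dotProduct_self]
  positivity

lemma re_star_mulVec_dotProduct_mulVec_le [DecidableEq m] (X : Matrix m m ℂ) (x : m → ℂ) :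
    (star (X *ᵥ x) ⬝ᵥ X *ᵥ x).re ≤ specNorm X ^ 2 * (star x ⬝ᵥ x).re := by
  rw [re_star_dotProduct_self, re_star_dotProduct_self, ← mul_pow, ← toEuclideanCLM_toLp]
  gcongr
  exact (toEuclideanCLM (𝕜 := ℂ) X).le_opNorm _

lemma Matrix.IsHermitian.star_star_mulVec_dotProduct {D : Matrix m m ℂ} (hD : D.IsHermitian)
    (x : m → ℂ) : star (star (D *ᵥ x) ⬝ᵥ x) = star (D *ᵥ x) ⬝ᵥ x := by
  rw [star_mulVec, hD.eq, ← dotProduct_mulVec]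
  exact Complex.conj_eq_iff_im.mpr (hD.im_star_dotProduct_mulVec_self x)

end Spectral

section QuadraticForms

variable {m : Type*} [Fintype m] (M : Matrix m m ℂ)

lemma star_dotProduct_conjTranspose_mulVec (a b : m → ℂ) :
    star a ⬝ᵥ Mᴴ *ᵥ b = star (star b ⬝ᵥ M *ᵥ a) := by
  rw [star_dotProduct, star_mulVec, conjTranspose_conjTranspose, ← dotProduct_mulVec]

variable {n : ℕ} (A E : Matrix (Fin n) (Fin n) ℂ) (μ : ℂ) (y z : Fin n → ℂ)

lemma isHermitian_Gmat : (Gmat A E μ).IsHermitian := by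
  simp only [Gmat, IsHermitian, fromBlocks_conjTranspose, conjTranspose_smul, conjTranspose_mul,
    conjTranspose_conjTranspose, Complex.star_def, map_mul, Complex.conj_conj, mul_comm]

lemma isHermitian_H1mat : (H1mat A E μ).IsHermitian := by
  rw [H1mat, IsHermitian, conjTranspose_smul, fromBlocks_conjTranspose]
  simp only [conjTranspose_smul, conjTranspose_sub, conjTranspose_neg,
    conjTranspose_conjTranspose, conjTranspose_zero, Complex.star_def, Complex.conj_I,
    Complex.conj_conj, neg_smul, ← smul_neg, fromBlocks_neg, neg_neg, neg_sub, neg_zero]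

lemma isHermitian_H2mat : (H2mat A E μ).IsHermitian := by
  rw [H2mat, IsHermitian, conjTranspose_smul, fromBlocks_conjTranspose]
  simp only [conjTranspose_smul, conjTranspose_sub, conjTranspose_neg,
    conjTranspose_conjTranspose, conjTranspose_zero, Complex.star_def, Complex.conj_I,
    Complex.conj_conj, neg_smul, ← smul_neg, fromBlocks_neg, neg_neg, neg_sub, neg_zero]

lemma star_dotProduct_Gmat_mulVec :
    star (Sum.elim y z) ⬝ᵥ Gmat A E μ *ᵥ Sum.elim y z =
      star ((A + μ • E)⁻¹ *ᵥ (y + μ • z)) ⬝ᵥ (A + μ • E)⁻¹ *ᵥ (y + μ • z) := by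
  rw [Gmat]
  generalize (A + μ • E)⁻¹ = M
  simp only [Function.star_sumElim, fromBlocks_mulVec, sumElim_dotProduct_sumElim,
    ← mulVec_mulVec, star_mulVec, ← dotProduct_mulVec, smul_mulVec, mulVec_add, mulVec_smul,
    dotProduct_add, add_dotProduct, dotProduct_smul, smul_dotProduct, star_add, star_smul,
    Complex.star_def, smul_eq_mul, Sum.elim_comp_inl, Sum.elim_comp_inr]
  ring

lemma star_dotProduct_H1mat_mulVec :
    star (Sum.elim y z) ⬝ᵥ H1mat A E μ *ᵥ Sum.elim y z =
      Complex.I * (star y ⬝ᵥ (A + μ • E)⁻¹ *ᵥ (y + μ • z) -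
        star (star y ⬝ᵥ (A + μ • E)⁻¹ *ᵥ (y + μ • z))) := by
  rw [H1mat]
  generalize (A + μ • E)⁻¹ = M
  simp only [smul_mulVec, dotProduct_smul, smul_eq_mul, Function.star_sumElim,
    fromBlocks_mulVec, sumElim_dotProduct_sumElim, Sum.elim_comp_inl, Sum.elim_comp_inr,
    dotProduct_add, sub_mulVec, neg_mulVec, zero_mulVec, add_zero, dotProduct_sub,
    dotProduct_neg, star_dotProduct_conjTranspose_mulVec, mulVec_add, mulVec_smul, star_add,
    star_mul', Complex.star_def]
  ring

lemma star_dotProduct_H2mat_mulVec :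
    star (Sum.elim y z) ⬝ᵥ H2mat A E μ *ᵥ Sum.elim y z =
      Complex.I * (star z ⬝ᵥ (A + μ • E)⁻¹ *ᵥ (y + μ • z) -
        star (star z ⬝ᵥ (A + μ • E)⁻¹ *ᵥ (y + μ • z))) := by
  rw [H2mat]
  generalize (A + μ • E)⁻¹ = M
  simp only [smul_mulVec, dotProduct_smul, smul_eq_mul, Function.star_sumElim,
    fromBlocks_mulVec, sumElim_dotProduct_sumElim, Sum.elim_comp_inl, Sum.elim_comp_inr,
    dotProduct_add, sub_mulVec, neg_mulVec, zero_mulVec, zero_add, dotProduct_sub,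
    dotProduct_neg, star_dotProduct_conjTranspose_mulVec, mulVec_add, mulVec_smul, star_add,
    star_mul', Complex.star_def]
  ring

end QuadraticForms

lemma exists_ne_zero_inv_mulVec_eq_of_det_eq_zero {K m : Type*} [Field K] [Fintype m]
    [DecidableEq m] {A E DA DE : Matrix m m K} {μ : K} (hinv : IsUnit (A + μ • E))
    (hsing : ((A - DA) + μ • (E - DE)).det = 0) :
    ∃ x ≠ 0, (A + μ • E)⁻¹ *ᵥ (DA *ᵥ x + μ • (DE *ᵥ x)) = x := by
  obtain ⟨x, hx0, hx⟩ := exists_mulVec_eq_zero_iff.mpr hsing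
  refine ⟨x, hx0, ?_⟩
  have hpencil : (A + μ • E) *ᵥ x = DA *ᵥ x + μ • (DE *ᵥ x) := by
    rw [← sub_eq_zero, ← hx]
    simp only [add_mulVec, sub_mulVec, smul_mulVec, smul_sub]
    abel
  rw [← hpencil, mulVec_mulVec, nonsing_inv_mul _ ((isUnit_iff_isUnit_det _).mp hinv),
    one_mulVec]

section Pencil

variable {n : ℕ} {A E DA DE : Matrix (Fin n) (Fin n) ℂ} {μ : ℂ}

theorem one_le_lamMax_mul_of_det_eq_zero (hDA : DA.IsHermitian) (hDE : DE.IsHermitian)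
    (hinv : IsUnit (A + μ • E)) (hsing : ((A - DA) + μ • (E - DE)).det = 0) (t₀ t₁ : ℝ) :
    1 ≤ lamMax (Gmat A E μ + (t₀ : ℂ) • H1mat A E μ + (t₁ : ℂ) • H2mat A E μ) *
      (specNorm DA ^ 2 + specNorm DE ^ 2) := by
  obtain ⟨x, hx0, hx⟩ := exists_ne_zero_inv_mulVec_eq_of_det_eq_zero hinv hsing
  set K := Gmat A E μ + (t₀ : ℂ) • H1mat A E μ + (t₁ : ℂ) • H2mat A E μ
  set w := Sum.elim (DA *ᵥ x) (DE *ᵥ x)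
  have hK : K.IsHermitian :=
    ((isHermitian_Gmat A E μ).add ((isHermitian_H1mat A E μ).smul (Complex.conj_ofReal t₀))).add
      ((isHermitian_H2mat A E μ).smul (Complex.conj_ofReal t₁))
  have hquad : star w ⬝ᵥ K *ᵥ w = star x ⬝ᵥ x := by
    simp only [K, w, add_mulVec, smul_mulVec, dotProduct_add, dotProduct_smul,
      star_dotProduct_Gmat_mulVec, star_dotProduct_H1mat_mulVec, star_dotProduct_H2mat_mulVec,
      hx, hDA.star_star_mulVec_dotProduct, hDE.star_star_mulVec_dotProduct, sub_self, mul_zero,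
      smul_zero, add_zero]
  have hw : (star w ⬝ᵥ w).re ≤ (specNorm DA ^ 2 + specNorm DE ^ 2) * (star x ⬝ᵥ x).re := by
    simp only [w, Function.star_sumElim, sumElim_dotProduct_sumElim, Complex.add_re]
    linarith [re_star_mulVec_dotProduct_mulVec_le DA x, re_star_mulVec_dotProduct_mulVec_le DE x]
  have hray := hK.re_dotProduct_mulVec_le_lamMax w
  rw [hquad] at hray
  have hx_pos := re_star_dotProduct_self_pos hx0
  have hw_nonneg : 0 ≤ (star w ⬝ᵥ w).re := by
    rw [re_star_dotProduct_self]
    positivity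
  have hL : 0 ≤ lamMax K := by
    by_contra! h
    nlinarith
  nlinarith [mul_le_mul_of_nonneg_left hw hL]

theorem inv_iInf_lamMax_le_of_det_eq_zero (hDA : DA.IsHermitian) (hDE : DE.IsHermitian)
    (hinv : IsUnit (A + μ • E)) (hsing : ((A - DA) + μ • (E - DE)).det = 0) :
    (⨅ t₀ : ℝ, ⨅ t₁ : ℝ,
        lamMax (Gmat A E μ + (t₀ : ℂ) • H1mat A E μ + (t₁ : ℂ) • H2mat A E μ))⁻¹ ≤
      specNorm DA ^ 2 + specNorm DE ^ 2 := by
  have key := one_le_lamMax_mul_of_det_eq_zero hDA hDE hinv hsing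
  have hs : 0 < specNorm DA ^ 2 + specNorm DE ^ 2 := by
    refine (add_nonneg (sq_nonneg _) (sq_nonneg _)).lt_of_ne fun h => ?_
    have h1 := key 0 0
    rw [← h, mul_zero] at h1
    linarith
  exact inv_le_of_inv_le₀ hs
    (le_ciInf fun t₀ => le_ciInf fun t₁ => (inv_le_iff_one_le_mul₀ hs).mpr (key t₀ t₁))

end Pencil

lemma le_sq_sInf_of_forall_le_sq {S : Set ℝ} {a : ℝ} (hS : S.Nonempty)
    (h : ∀ r ∈ S, 0 ≤ r ∧ a ≤ r ^ 2) : a ≤ sInf S ^ 2 :=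
  (Real.sqrt_le_iff.mp (le_csInf hS fun r hr => Real.sqrt_le_iff.mpr (h r hr))).2

theorem hermitian_distance_to_singularity_lower_bound_general
    {n : ℕ} (A E : Matrix (Fin n) (Fin n) ℂ)
    (hA : A.IsHermitian) (hE : E.IsHermitian)
    (l : Fin (n + 1) → ℂ)
    (hinv : ∀ j, IsUnit (A + l j • E)) :
    (sInf {r : ℝ | ∃ DA DE : Matrix (Fin n) (Fin n) ℂ,
        DA.IsHermitian ∧ DE.IsHermitian ∧
        (∀ μ : ℂ, ((A - DA) + μ • (E - DE)).det = 0) ∧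
        r = Real.sqrt (specNorm DA ^ 2 + specNorm DE ^ 2)}) ^ 2 ≥
      ⨆ j : Fin (n + 1),
        (⨅ t₀ : ℝ, ⨅ t₁ : ℝ,
          lamMax (Gmat A E (l j) + (t₀ : ℂ) • H1mat A E (l j) +
            (t₁ : ℂ) • H2mat A E (l j)))⁻¹ := by
  -- For `n = 0` no perturbation is admissible (the empty determinant is `1`): both sides are `0`.
  rcases isEmpty_or_nonempty (Fin n) with hn | hn
  · simpa only [lamMax_of_isEmpty, ciInf_const, _root_.inv_zero, ciSup_const] using sq_nonneg _
  refine ciSup_le fun j => le_sq_sInf_of_forall_le_sq ⟨_, A, E, hA, hE, fun μ => by simp, rfl⟩ ?_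
  rintro r ⟨DA, DE, hDA, hDE, hsing, rfl⟩
  refine ⟨Real.sqrt_nonneg _, ?_⟩
  rw [Real.sq_sqrt (by positivity)]
  exact inv_iInf_lamMax_le_of_det_eq_zero hDA hDE (hinv j) (hsing (l j))

/-- A family of lower bounds for the Hermitian structured distance to
singularity: for pairwise distinct non-real `λ₁, …, λ_{n+1}` at which the
pencil is invertible,
`δ^Herm(A,E)² ≥ max_j (inf_{t₀,t₁ ∈ ℝ} λ_max(G_j + t₀H_{1j} + t₁H_{2j}))⁻¹`. -/
theorem hermitian_distance_to_singularity_lower_bound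
    {n : ℕ} (A E : Matrix (Fin n) (Fin n) ℂ)
    (hA : A.IsHermitian) (hE : E.IsHermitian)
    (hreg : ∃ l : ℂ, (A + l • E).det ≠ 0)
    (l : Fin (n + 1) → ℂ) (hl : Function.Injective l)
    (hnonreal : ∀ j, (l j).im ≠ 0)
    (hinv : ∀ j, IsUnit (A + l j • E)) :
    (sInf {r : ℝ | ∃ DA DE : Matrix (Fin n) (Fin n) ℂ,
        DA.IsHermitian ∧ DE.IsHermitian ∧
        (∀ μ : ℂ, ((A - DA) + μ • (E - DE)).det = 0) ∧
        r = Real.sqrt (specNorm DA ^ 2 + specNorm DE ^ 2)}) ^ 2 ≥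
      ⨆ j : Fin (n + 1),
        (⨅ t₀ : ℝ, ⨅ t₁ : ℝ,
          lamMax (Gmat A E (l j) + (t₀ : ℂ) • H1mat A E (l j) +
            (t₁ : ℂ) • H2mat A E (l j)))⁻¹ :=
  hermitian_distance_to_singularity_lower_bound_general A E hA hE l hinv
end
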